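/- The one-stage look-ahead rule is an optimal stopping rule: for every stopping time τ with respect to the natural filtration (σ(s_1,…,s_j))_{1≤j≤K} satisfying 1 ≤ τ ≤ J_max almost surely, the stopping step J* satisfies E[(1−J*β)·w_{J*}] ≥ E[(1−τβ)·w_τ]; that is, J* maximizes the expected reward E[y_J] over all stopping times bounded by J_max. -/

import Mathlib

/-!
This is the monotone case of optimal stopping. Write `y_j = (1 - jβ) w_j` and
`g_j(x) = (1 - (j+1)β) φ_{j+1}(x) - (1 - jβ) x`. Since `s_{j+1}` is independent of
`F_j = σ(s_1, …, s_j)`, the expected increment `E[y_{j+1} - y_j ; B]` equals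
`E[g_j(w_j) ; B]` for every `B ∈ F_j`. The regions `{g_j(w_j) ≤ 0}` increase with `j`: `w`
increases, `φ_{j+2} ≤ φ_{j+1}` because `c` decreases, and `φ_{j+1}` is `1`-Lipschitz with
`φ_{j+1}(x) ≥ x`. Hence `J* > j` exactly when `g_j(w_j) > 0`, and telescoping gives, for any
stopping time `τ`,
`E[y_τ] = E[y_1] + ∑_j E[g_j(w_j) ; τ > j] ≤ E[y_1] + ∑_j E[g_j(w_j) ; g_j(w_j) > 0] = E[y_{J*}]`.
-/

open MeasureTheory ProbabilityTheory

section IntegralMax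

variable {Ω : Type*} [MeasurableSpace Ω] {P : Measure Ω} {Y : Ω → ℝ}

lemma integrable_max_const [IsFiniteMeasure P] (hY : Integrable Y P) (x : ℝ) :
    Integrable (fun ω => max x (Y ω)) P :=
  (integrable_const x).sup hY

variable [IsProbabilityMeasure P]

lemma lipschitzWith_integral_max (hY : Integrable Y P) :
    LipschitzWith 1 (fun x => ∫ ω, max x (Y ω) ∂P) := by
  refine LipschitzWith.of_dist_le_mul fun a b => ?_
  rw [NNReal.coe_one, one_mul, Real.dist_eq, Real.dist_eq,
    ← integral_sub (integrable_max_const hY a) (integrable_max_const hY b)]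
  simpa using norm_integral_le_of_norm_le_const (μ := P)
    (f := fun ω => max a (Y ω) - max b (Y ω)) (C := |a - b|)
    (Filter.Eventually.of_forall fun ω => abs_max_sub_max_le_abs a b (Y ω))

lemma le_integral_max (hY : Integrable Y P) (x : ℝ) : x ≤ ∫ ω, max x (Y ω) ∂P := by
  simpa using integral_mono (integrable_const x) (integrable_max_const hY x)
    fun ω => le_max_left x (Y ω)

lemma integral_max_le_integral_max_add {X X' : Ω → ℝ} (hXX' : IdentDistrib X' X P P)
    (hX : Integrable X P) (hX0 : ∀ ω, 0 ≤ X ω) {a b : ℝ} (hab : a ≤ b) {x x' : ℝ}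
    (hxx' : x ≤ x') :
    ∫ ω, max x' (a * X' ω) ∂P ≤ ∫ ω, max x (b * X ω) ∂P + (x' - x) := by
  have hlaw := (hXX'.comp (u := fun t => max x' (a * t)) (by fun_prop)).integral_eq
  simp only [Function.comp_def] at hlaw
  have hlip := (lipschitzWith_integral_max (P := P) (hX.const_mul b)).dist_le_mul x' x
  rw [NNReal.coe_one, one_mul, Real.dist_eq, Real.dist_eq, abs_of_nonneg (sub_nonneg.mpr hxx')]
    at hlip
  calc ∫ ω, max x' (a * X' ω) ∂P = ∫ ω, max x' (a * X ω) ∂P := hlaw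
    _ ≤ ∫ ω, max x' (b * X ω) ∂P :=
        integral_mono (integrable_max_const (hX.const_mul a) x')
          (integrable_max_const (hX.const_mul b) x')
          fun ω => max_le_max le_rfl (mul_le_mul_of_nonneg_right hab (hX0 ω))
    _ ≤ ∫ ω, max x (b * X ω) ∂P + (x' - x) := by
        linarith [le_abs_self (∫ ω, max x' (b * X ω) ∂P - ∫ ω, max x (b * X ω) ∂P)]

end IntegralMax

lemma LipschitzWith.integrable_comp {Ω E F : Type*} [MeasurableSpace Ω] {P : Measure Ω}
    [IsFiniteMeasure P] [NormedAddCommGroup E] [NormedAddCommGroup F] {K : NNReal} {g : E → F}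
    (hg : LipschitzWith K g) {f : Ω → E} (hf : Integrable f P) :
    Integrable (fun ω => g (f ω)) P := by
  refine Integrable.mono' ((hf.norm.const_mul K).add (integrable_const ‖g 0‖))
    (hg.continuous.comp_aestronglyMeasurable hf.1) (Filter.Eventually.of_forall fun ω => ?_)
  show ‖g (f ω)‖ ≤ K * ‖f ω‖ + ‖g 0‖
  have := hg.norm_sub_le (f ω) 0
  rw [sub_zero] at this
  linarith [norm_sub_norm_le (g (f ω)) (g 0)]

namespace ProbabilityTheory

variable {Ω α β : Type*} {m mΩ : MeasurableSpace Ω} [MeasurableSpace α] [MeasurableSpace β]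
  {P : Measure Ω} [IsProbabilityMeasure P] {Y : Ω → β} {f : α × β → ℝ}

theorem IndepFun.integral_comp_eq_integral_integral {V : Ω → α} (hVY : IndepFun V Y P)
    (hV : Measurable V) (hY : Measurable Y) (hf : StronglyMeasurable f)
    (hfi : Integrable (fun ω => f (V ω, Y ω)) P) :
    ∫ ω, f (V ω, Y ω) ∂P = ∫ ω, ∫ ω', f (V ω, Y ω') ∂P ∂P := by
  have hVY' : Measurable fun ω => (V ω, Y ω) := hV.prodMk hY
  have hmap : P.map (fun ω => (V ω, Y ω)) = (P.map V).prod (P.map Y) :=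
    (indepFun_iff_map_prod_eq_prod_map_map hV.aemeasurable hY.aemeasurable).mp hVY
  have hfi' : Integrable f ((P.map V).prod (P.map Y)) := by
    rwa [← hmap, integrable_map_measure hf.aestronglyMeasurable hVY'.aemeasurable]
  calc ∫ ω, f (V ω, Y ω) ∂P = ∫ z, f z ∂((P.map V).prod (P.map Y)) := by
        rw [← hmap, integral_map hVY'.aemeasurable hf.aestronglyMeasurable]
    _ = ∫ a, ∫ b, f (a, b) ∂(P.map Y) ∂(P.map V) := integral_prod f hfi'
    _ = ∫ ω, ∫ b, f (V ω, b) ∂(P.map Y) ∂P :=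
        integral_map hV.aemeasurable hf.integral_prod_right'.aestronglyMeasurable
    _ = ∫ ω, ∫ ω', f (V ω, Y ω') ∂P ∂P := by
        congr 1 with ω
        exact integral_map hY.aemeasurable
          (hf.comp_measurable measurable_prodMk_left).aestronglyMeasurable

theorem Indep.setIntegral_comp_eq_setIntegral_integral (hm : m ≤ mΩ)
    (hind : Indep m (MeasurableSpace.comap Y inferInstance) P) {W : Ω → α} (hW : Measurable[m] W)
    (hY : Measurable Y) (hf : StronglyMeasurable f) (hfi : Integrable (fun ω => f (W ω, Y ω)) P)
    {B : Set Ω} (hB : MeasurableSet[m] B) :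
    ∫ ω in B, f (W ω, Y ω) ∂P = ∫ ω in B, ∫ ω', f (W ω, Y ω') ∂P ∂P := by
  -- apply the unconditional version to the pair `(W, 1_B)`, which is independent of `Y`
  set χ : Ω → ℝ := B.indicator fun _ => 1
  have hχm : Measurable[m] χ := Measurable.indicator measurable_const hB
  have hV : Measurable[m] fun ω => (W ω, χ ω) := hW.prodMk hχm
  have hVY : IndepFun (fun ω => (W ω, χ ω)) Y P :=
    (IndepFun_iff_Indep _ _ _).mpr (indep_of_indep_of_le_left hind hV.comap_le)
  have hg : StronglyMeasurable fun p : (α × ℝ) × β => p.1.2 * f (p.1.1, p.2) :=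
    measurable_fst.snd.stronglyMeasurable.mul
      (hf.comp_measurable (measurable_fst.fst.prodMk measurable_snd))
  have hχ (h : Ω → ℝ) : (fun ω => χ ω * h ω) = B.indicator h := by
    ext ω
    by_cases hω : ω ∈ B <;> simp [χ, hω]
  have key := hVY.integral_comp_eq_integral_integral (hV.mono hm le_rfl) hY hg (by
    simpa only [hχ] using hfi.indicator (hm B hB))
  simp only [integral_const_mul] at key
  rwa [hχ (fun ω => f (W ω, Y ω)), hχ (fun ω => ∫ ω', f (W ω, Y ω') ∂P),
    integral_indicator (hm B hB), integral_indicator (hm B hB)] at key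

theorem Indep.setIntegral_max_sub_eq (hm : m ≤ mΩ) {W Y : Ω → ℝ}
    (hind : Indep m (MeasurableSpace.comap Y inferInstance) P) (hW : Measurable[m] W)
    (hY : Measurable Y) (hWi : Integrable W P) (hYi : Integrable Y P) (a b : ℝ) {B : Set Ω}
    (hB : MeasurableSet[m] B) :
    ∫ ω in B, (a * max (W ω) (Y ω) - b * W ω) ∂P =
      ∫ ω in B, (a * ∫ ω', max (W ω) (Y ω') ∂P - b * W ω) ∂P := by
  rw [hind.setIntegral_comp_eq_setIntegral_integral hm hW hY
    (f := fun p => a * max p.1 p.2 - b * p.1) (by fun_prop)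
    (((hWi.sup hYi).const_mul a).sub (hWi.const_mul b)) hB]
  refine setIntegral_congr_fun (hm B hB) fun ω _ => ?_
  dsimp only
  rw [integral_sub ((integrable_max_const hYi _).const_mul a) (integrable_const _),
    integral_const_mul, integral_const, probReal_univ, one_smul]

end ProbabilityTheory

section NaturalFiltration

variable {Ω γ δ : Type*} [MeasurableSpace γ] [MeasurableSpace δ] {s : ℕ → Ω → γ}

abbrev natFiltration (s : ℕ → Ω → γ) (j : ℕ) : MeasurableSpace Ω :=
  ⨆ k ∈ Finset.Icc 1 j, MeasurableSpace.comap (s k) inferInstance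

lemma comap_le_natFiltration {k j : ℕ} (hk : k ∈ Finset.Icc 1 j) :
    MeasurableSpace.comap (s k) inferInstance ≤ natFiltration s j :=
  le_iSup₂ (f := fun k (_ : k ∈ Finset.Icc 1 j) => MeasurableSpace.comap (s k) inferInstance) k hk

lemma measurable_natFiltration {k j : ℕ} (hk : k ∈ Finset.Icc 1 j) :
    Measurable[natFiltration s j] (s k) :=
  Measurable.of_comap_le (comap_le_natFiltration hk)

lemma natFiltration_mono : Monotone (natFiltration s) := fun _ _ hij =>
  iSup₂_le fun _ hk => comap_le_natFiltration (Finset.Icc_subset_Icc_right hij hk)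

lemma natFiltration_le [MeasurableSpace Ω] (hs : ∀ k, Measurable (s k)) (j : ℕ) :
    natFiltration s j ≤ ‹MeasurableSpace Ω› :=
  iSup₂_le fun k _ => (hs k).comap_le

lemma natFiltration_le_natFiltration {t : ℕ → Ω → δ}
    (h : ∀ k, MeasurableSpace.comap (s k) inferInstance ≤ MeasurableSpace.comap (t k) inferInstance)
    (j : ℕ) : natFiltration s j ≤ natFiltration t j :=
  iSup₂_mono fun k _ => h k

theorem ProbabilityTheory.iIndepFun.indep_natFiltration_comap_succ [MeasurableSpace Ω]
    {P : Measure Ω} {K : ℕ} {X : ℕ → Ω → γ} (hX : iIndepFun (fun k : Fin K => X (k + 1)) P)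
    (hXm : ∀ k, Measurable (X k)) {t : ℕ → Ω → δ}
    (htX : ∀ k,
      MeasurableSpace.comap (t k) inferInstance ≤ MeasurableSpace.comap (X k) inferInstance)
    {j : ℕ} (hj : j < K) :
    Indep (natFiltration t j) (MeasurableSpace.comap (t (j + 1)) inferInstance) P := by
  let m : Fin K → MeasurableSpace Ω := fun i => MeasurableSpace.comap (X (i + 1)) inferInstance
  have key := indep_biSup_compl (fun i => (hXm _).comap_le) ((iIndepFun_iff_iIndep _ _ _).mp hX)
    {i : Fin K | (i : ℕ) < j}
  refine indep_of_indep_of_le_left (indep_of_indep_of_le_right key ((htX _).trans ?_))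
    ((natFiltration_le_natFiltration htX j).trans ?_)
  · exact le_biSup m (show (⟨j, hj⟩ : Fin K) ∈ {i : Fin K | (i : ℕ) < j}ᶜ by simp)
  · refine iSup₂_le fun k hk => ?_
    obtain ⟨hk1, hkj⟩ := Finset.mem_Icc.mp hk
    obtain ⟨i, rfl⟩ : ∃ i, k = i + 1 := ⟨k - 1, by omega⟩
    exact le_biSup m (show (⟨i, by omega⟩ : Fin K) ∈ {i : Fin K | (i : ℕ) < j} by
      simp only [Set.mem_ofPred_eq]; omega)

end NaturalFiltration

lemma measurableSet_lt_of_measurableSet_eq {Ω : Type*} {F : ℕ → MeasurableSpace Ω}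
    (hF : Monotone F) {τ : Ω → ℕ} (hτ : ∀ j, MeasurableSet[F j] {ω | τ ω = j}) (j : ℕ) :
    MeasurableSet[F j] {ω | j < τ ω} := by
  have h : {ω | j < τ ω} = (⋃ i ∈ Finset.range (j + 1), {ω | τ ω = i})ᶜ := by
    ext ω
    simp only [Set.mem_ofPred_eq, Set.mem_compl_iff, Set.mem_iUnion, Finset.mem_range, not_exists]
    exact ⟨fun h i hi hτi => by omega, fun h => by by_contra! hτj; exact h (τ ω) (by omega) rfl⟩
  rw [h]
  exact (Finset.measurableSet_biUnion _ fun i hi =>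
    hF (Nat.lt_succ_iff.mp (Finset.mem_range.mp hi)) _ (hτ i)).compl

section RunningMax

variable {Ω : Type*} {s w : ℕ → Ω → ℝ}

lemma measurable_runningMax (hw0 : ∀ ω, w 0 ω = 0)
    (hw : ∀ j ω, w (j + 1) ω = max (w j ω) (s (j + 1) ω)) (j : ℕ) :
    Measurable[natFiltration s j] (w j) := by
  induction j with
  | zero => simp [funext hw0]
  | succ j ih =>
    rw [show w (j + 1) = fun ω => max (w j ω) (s (j + 1) ω) from funext (hw j)]
    exact (ih.mono (natFiltration_mono j.le_succ) le_rfl).max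
      (measurable_natFiltration (Finset.mem_Icc.mpr ⟨j.succ_pos, le_rfl⟩))

lemma integrable_runningMax [MeasurableSpace Ω] {P : Measure Ω} [IsFiniteMeasure P]
    (hs : ∀ k, Integrable (s k) P) (hw0 : ∀ ω, w 0 ω = 0)
    (hw : ∀ j ω, w (j + 1) ω = max (w j ω) (s (j + 1) ω)) (j : ℕ) : Integrable (w j) P := by
  induction j with
  | zero => simp [funext hw0]
  | succ j ih =>
    rw [show w (j + 1) = w j ⊔ s (j + 1) from funext (hw j)]
    exact ih.sup (hs (j + 1))

end RunningMax

section FirstEntry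

noncomputable def firstEntry (p : ℕ → Prop) (N : ℕ) : ℕ :=
  sInf ({i | 1 ≤ i ∧ i ≤ N - 1 ∧ p i} ∪ {N})

variable {p : ℕ → Prop} {N : ℕ}

lemma firstEntry_mem_Icc (hN : 1 ≤ N) : firstEntry p N ∈ Finset.Icc 1 N := by
  unfold firstEntry
  have hmem : N ∈ ({i | 1 ≤ i ∧ i ≤ N - 1 ∧ p i} ∪ {N}) := Or.inr rfl
  refine Finset.mem_Icc.mpr ⟨?_, Nat.sInf_le hmem⟩
  rcases Nat.sInf_mem ⟨N, hmem⟩ with h | h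
  · exact h.1
  · rwa [Set.mem_singleton_iff.mp h]

lemma lt_firstEntry_iff (hp : ∀ i, 1 ≤ i → i + 2 ≤ N → p i → p (i + 1)) {j : ℕ}
    (hj : j ∈ Finset.Ico 1 N) : j < firstEntry p N ↔ ¬ p j := by
  obtain ⟨hj1, hjN⟩ := Finset.mem_Ico.mp hj
  unfold firstEntry
  refine ⟨fun hlt hpj => (Nat.sInf_le (Or.inl ⟨hj1, by omega, hpj⟩)).not_gt hlt, fun hpj => ?_⟩
  by_contra! hle
  rcases Nat.sInf_mem (⟨N, Or.inr rfl⟩ : ({i | 1 ≤ i ∧ i ≤ N - 1 ∧ p i} ∪ {N}).Nonempty)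
    with ⟨hi1, -, hpi⟩ | hiN
  · have hchain : ∀ k, sInf ({i | 1 ≤ i ∧ i ≤ N - 1 ∧ p i} ∪ {N}) ≤ k → k < N → p k :=
      Nat.le_induction (fun _ => hpi) fun k hk ih hkN => hp k (by omega) hkN (ih (by omega))
    exact hpj (hchain j hle hjN)
  · rw [Set.mem_singleton_iff.mp hiN] at hle
    omega

end FirstEntry

lemma eq_add_sum_Ico_ite_lt {M : Type*} [AddCommGroup M] (a : ℕ → M) {t N : ℕ}
    (ht : t ∈ Finset.Icc 1 N) :
    a t = a 1 + ∑ j ∈ Finset.Ico 1 N, if j < t then a (j + 1) - a j else 0 := by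
  obtain ⟨ht1, htN⟩ := Finset.mem_Icc.mp ht
  rw [← Finset.sum_filter, Finset.Ico_filter_lt, min_eq_right htN, Finset.sum_Ico_sub a ht1]
  abel

section OptimalStopping

variable {Ω : Type*} {mΩ : MeasurableSpace Ω} {μ : Measure Ω} {y : ℕ → Ω → ℝ} {N : ℕ}

lemma setIntegral_le_setIntegral_pos {f : Ω → ℝ} (hf : Integrable f μ) (hfm : Measurable f)
    {s : Set Ω} (hs : MeasurableSet s) : ∫ ω in s, f ω ∂μ ≤ ∫ ω in {ω | 0 < f ω}, f ω ∂μ := by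
  rw [← integral_indicator hs, ← integral_indicator (measurableSet_lt measurable_const hfm)]
  refine integral_mono (hf.indicator hs) (hf.indicator (measurableSet_lt measurable_const hfm))
    fun ω => ?_
  by_cases hωs : ω ∈ s <;> by_cases hfω : 0 < f ω <;> simp [hωs, hfω] <;> linarith

lemma integral_stopped_eq_add_sum (hy : ∀ j, Integrable (y j) μ) {τ : Ω → ℕ}
    (hτm : ∀ j ∈ Finset.Ico 1 N, MeasurableSet {ω | j < τ ω})
    (hτ : ∀ᵐ ω ∂μ, τ ω ∈ Finset.Icc 1 N) :
    ∫ ω, y (τ ω) ω ∂μ =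
      ∫ ω, y 1 ω ∂μ + ∑ j ∈ Finset.Ico 1 N, ∫ ω in {ω | j < τ ω}, (y (j + 1) ω - y j ω) ∂μ := by
  have hint : ∀ j ∈ Finset.Ico 1 N,
      Integrable ({ω | j < τ ω}.indicator fun ω => y (j + 1) ω - y j ω) μ :=
    fun j hj => ((hy _).sub (hy _)).indicator (hτm j hj)
  calc ∫ ω, y (τ ω) ω ∂μ
      = ∫ ω, (y 1 ω + ∑ j ∈ Finset.Ico 1 N,
          {ω | j < τ ω}.indicator (fun ω => y (j + 1) ω - y j ω) ω) ∂μ := by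
        refine integral_congr_ae (hτ.mono fun ω hω => ?_)
        simpa only [Set.indicator_apply, Set.mem_ofPred_eq] using
          eq_add_sum_Ico_ite_lt (y · ω) hω
    _ = _ := by
        rw [integral_add (hy 1) (integrable_finsetSum _ hint), integral_finsetSum _ hint]
        exact congrArg _ (Finset.sum_congr rfl fun j hj => integral_indicator (hτm j hj))

-- `hσg` forces `{0 < g j}` to decrease in `j`: this is the monotone case.
theorem integral_stopped_le_of_continue_iff_gain_pos {F : ℕ → MeasurableSpace Ω}
    (hF : ∀ j, F j ≤ mΩ) {g : ℕ → Ω → ℝ} (hy : ∀ j, Integrable (y j) μ)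
    (hg : ∀ j, Integrable (g j) μ) (hgF : ∀ j, Measurable[F j] (g j))
    (hyg : ∀ j ∈ Finset.Ico 1 N, ∀ B, MeasurableSet[F j] B →
      ∫ ω in B, (y (j + 1) ω - y j ω) ∂μ = ∫ ω in B, g j ω ∂μ)
    {τ σ : Ω → ℕ} (hτF : ∀ j, MeasurableSet[F j] {ω | j < τ ω})
    (hτ : ∀ᵐ ω ∂μ, τ ω ∈ Finset.Icc 1 N)
    (hσg : ∀ j ∈ Finset.Ico 1 N, {ω | j < σ ω} = {ω | 0 < g j ω})
    (hσ : ∀ᵐ ω ∂μ, σ ω ∈ Finset.Icc 1 N) :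
    ∫ ω, y (τ ω) ω ∂μ ≤ ∫ ω, y (σ ω) ω ∂μ := by
  have hσF : ∀ j ∈ Finset.Ico 1 N, MeasurableSet[F j] {ω | j < σ ω} := fun j hj =>
    hσg j hj ▸ measurableSet_lt measurable_const (hgF j)
  rw [integral_stopped_eq_add_sum hy (fun j _ => hF j _ (hτF j)) hτ,
    integral_stopped_eq_add_sum hy (fun j hj => hF j _ (hσF j hj)) hσ]
  refine add_le_add_right (Finset.sum_le_sum fun j hj => ?_) _
  rw [hyg j hj _ (hτF j), hyg j hj _ (hσF j hj), hσg j hj]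
  exact setIntegral_le_setIntegral_pos (hg j) ((hgF j).mono (hF j) le_rfl) (hF j _ (hτF j))

end OptimalStopping

section LookaheadGain

variable {Ω : Type*} {φ : ℕ → ℝ → ℝ}

def lookaheadGain (β : ℝ) (φ : ℕ → ℝ → ℝ) (j : ℕ) (x : ℝ) : ℝ :=
  (1 - ((j : ℝ) + 1) * β) * φ (j + 1) x - (1 - (j : ℝ) * β) * x

lemma lookaheadGain_succ_nonpos {β : ℝ} {j : ℕ} {x x' : ℝ} (hβ : 0 ≤ β)
    (hj : ((j : ℝ) + 2) * β ≤ 1) (hxx' : x ≤ x') (hxφ : x ≤ φ (j + 1) x)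
    (hφ : φ (j + 2) x' ≤ φ (j + 1) x + (x' - x)) (h : lookaheadGain β φ j x ≤ 0) :
    lookaheadGain β φ (j + 1) x' ≤ 0 := by
  unfold lookaheadGain at *
  push_cast
  nlinarith [mul_le_mul_of_nonneg_left hφ (by linarith : 0 ≤ 1 - ((j : ℝ) + 2) * β),
    mul_nonneg hβ (sub_nonneg.mpr hxφ), mul_nonneg hβ (sub_nonneg.mpr hxx')]

lemma measurable_lookaheadGain {m : MeasurableSpace Ω} {W : Ω → ℝ} {j : ℕ}
    (hφ : Continuous (φ (j + 1))) (hW : Measurable[m] W) (β : ℝ) :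
    Measurable[m] fun ω => lookaheadGain β φ j (W ω) :=
  ((hφ.measurable.comp hW).const_mul _).sub (hW.const_mul _)

variable [MeasurableSpace Ω] {P : Measure Ω} [IsProbabilityMeasure P] {s w : ℕ → Ω → ℝ}

lemma integrable_lookaheadGain {W : Ω → ℝ} {j : ℕ} (hφ : LipschitzWith 1 (φ (j + 1)))
    (hW : Integrable W P) (β : ℝ) : Integrable (fun ω => lookaheadGain β φ j (W ω)) P :=
  ((hφ.integrable_comp hW).const_mul _).sub (hW.const_mul _)

lemma lookaheadGain_runningMax_succ_nonpos {X : ℕ → Ω → ℝ}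
    (hXident : ∀ k l, IdentDistrib (X k) (X l) P P) (hXint : ∀ k, Integrable (X k) P)
    (hX0 : ∀ k ω, 0 ≤ X k ω) {c : ℕ → ℝ} (hc : Antitone c) (hs : ∀ k ω, s k ω = c k * X k ω)
    (hw : ∀ j ω, w (j + 1) ω = max (w j ω) (s (j + 1) ω))
    (hφ : ∀ k x, φ k x = ∫ ω, max x (s k ω) ∂P) {β : ℝ} (hβ : 0 ≤ β) {j : ℕ}
    (hj : ((j : ℝ) + 2) * β ≤ 1) (ω : Ω) (h : lookaheadGain β φ j (w j ω) ≤ 0) :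
    lookaheadGain β φ (j + 1) (w (j + 1) ω) ≤ 0 := by
  have hs' : ∀ k, s k = fun ω => c k * X k ω := fun k => funext (hs k)
  refine lookaheadGain_succ_nonpos hβ hj (hw j ω ▸ le_max_left _ _) ?_ ?_ h
  · rw [hφ, hs' (j + 1)]
    exact le_integral_max ((hXint _).const_mul _) _
  · rw [hφ, hφ, hs' (j + 1), hs' (j + 2)]
    exact integral_max_le_integral_max_add (hXident _ _) (hXint _) (hX0 _) (hc (j + 1).le_succ)
      (hw j ω ▸ le_max_left _ _)

lemma setIntegral_reward_succ_sub_eq_lookaheadGain (hsm : ∀ k, Measurable (s k))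
    (hsi : ∀ k, Integrable (s k) P) (hw0 : ∀ ω, w 0 ω = 0)
    (hw : ∀ j ω, w (j + 1) ω = max (w j ω) (s (j + 1) ω))
    (hφ : ∀ k x, φ k x = ∫ ω, max x (s k ω) ∂P) (β : ℝ) {j : ℕ}
    (hind : Indep (natFiltration s j) (MeasurableSpace.comap (s (j + 1)) inferInstance) P)
    {B : Set Ω} (hB : MeasurableSet[natFiltration s j] B) :
    ∫ ω in B, ((1 - ((j + 1 : ℕ) : ℝ) * β) * w (j + 1) ω - (1 - (j : ℝ) * β) * w j ω) ∂P =
      ∫ ω in B, lookaheadGain β φ j (w j ω) ∂P := by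
  simp only [hw, lookaheadGain, hφ, Nat.cast_succ]
  exact hind.setIntegral_max_sub_eq (natFiltration_le hsm j) (measurable_runningMax hw0 hw j)
    (hsm _) (integrable_runningMax hsi hw0 hw j) (hsi _) _ _ hB

end LookaheadGain

theorem one_stage_lookahead_optimal_general
    {Ω : Type*} [MeasurableSpace Ω] (P : Measure Ω) [IsProbabilityMeasure P]
    (K : ℕ)
    (X : ℕ → Ω → ℝ)
    (hXmeas : ∀ k, Measurable (X k))
    (hXnonneg : ∀ k ω, 0 ≤ X k ω)
    (hXint : ∀ k, Integrable (X k) P)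
    (hXindep : iIndepFun (fun k : Fin K => X (k + 1)) P)
    (hXident : ∀ k l, IdentDistrib (X k) (X l) P P)
    (c : ℕ → ℝ)
    (hc_mono : ∀ k l : ℕ, k ≤ l → c l ≤ c k)
    (β : ℝ) (hβ0 : 0 < β)
    (Jmax : ℕ) (hJmax : Jmax = min K ⌊1 / β⌋₊)
    (s : ℕ → Ω → ℝ) (hs : ∀ k ω, s k ω = c k * X k ω)
    (w : ℕ → Ω → ℝ)
    (hw0 : ∀ ω, w 0 ω = 0)
    (hw : ∀ j ω, w (j + 1) ω = max (w j ω) (s (j + 1) ω))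
    (φ : ℕ → ℝ → ℝ)
    (hφ : ∀ k x, φ k x = ∫ ω, max x (s k ω) ∂P)
    (F : ℕ → MeasurableSpace Ω)
    (hF : ∀ j, F j = ⨆ k ∈ Finset.Icc 1 j, MeasurableSpace.comap (s k) inferInstance)
    (Jstar : Ω → ℕ)
    (hJstar : ∀ ω, Jstar ω =
      sInf ({j : ℕ | 1 ≤ j ∧ j ≤ Jmax - 1 ∧
        (1 - (j : ℝ) * β) * w j ω ≥ (1 - ((j : ℝ) + 1) * β) * φ (j + 1) (w j ω)}
        ∪ {Jmax}))
    (τ : Ω → ℕ)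
    (hτ_stopping : ∀ j : ℕ, MeasurableSet[F j] {ω | τ ω = j})
    (hτ_range : ∀ᵐ ω ∂P, 1 ≤ τ ω ∧ τ ω ≤ Jmax) :
    ∫ ω, (1 - (τ ω : ℝ) * β) * w (τ ω) ω ∂P ≤
      ∫ ω, (1 - (Jstar ω : ℝ) * β) * w (Jstar ω) ω ∂P := by
  have hJ1 : 1 ≤ Jmax := by
    obtain ⟨ω, hω⟩ := hτ_range.exists
    exact hω.1.trans hω.2
  obtain rfl : F = natFiltration s := funext hF
  have hsX : ∀ k, s k = fun ω => c k * X k ω := fun k => funext (hs k)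
  have hsm : ∀ k, Measurable (s k) := fun k => hsX k ▸ (hXmeas k).const_mul (c k)
  have hsi : ∀ k, Integrable (s k) P := fun k => hsX k ▸ (hXint k).const_mul (c k)
  have hφL : ∀ k, LipschitzWith 1 (φ k) := fun k =>
    funext (hφ k) ▸ lipschitzWith_integral_max (hsi k)
  have hβJ : ∀ j ≤ Jmax, (j : ℝ) * β ≤ 1 := fun j hj =>
    (le_div_iff₀ hβ0).mp ((Nat.le_floor_iff (by positivity)).mp
      (hj.trans (hJmax ▸ min_le_right _ _)))
  have hsX' k := MeasurableSpace.comap_le_comap_of_eq_comp _ (measurable_const_mul (c k)) (hsX k)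
  set halt : Ω → ℕ → Prop := fun ω i =>
    (1 - (i : ℝ) * β) * w i ω ≥ (1 - ((i : ℝ) + 1) * β) * φ (i + 1) (w i ω)
  have hJstar' : ∀ ω, Jstar ω = firstEntry (halt ω) Jmax := hJstar
  have hJstar_lt : ∀ ω, ∀ j ∈ Finset.Ico 1 Jmax,
      j < Jstar ω ↔ 0 < lookaheadGain β φ j (w j ω) := fun ω j hj => by
    rw [hJstar' ω, lt_firstEntry_iff (p := halt ω) (fun i _ hi h => sub_nonpos.mp
      (lookaheadGain_runningMax_succ_nonpos hXident hXint hXnonneg hc_mono hs hw hφ hβ0.le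
        (by exact_mod_cast hβJ (i + 2) hi) ω (sub_nonpos.mpr h))) hj]
    exact not_le.trans sub_pos.symm
  exact integral_stopped_le_of_continue_iff_gain_pos (natFiltration_le hsm)
    (y := fun j ω => (1 - (j : ℝ) * β) * w j ω) (g := fun j ω => lookaheadGain β φ j (w j ω))
    (fun j => (integrable_runningMax hsi hw0 hw j).const_mul _)
    (fun j => integrable_lookaheadGain (hφL _) (integrable_runningMax hsi hw0 hw j) β)
    (fun j => measurable_lookaheadGain (hφL _).continuous (measurable_runningMax hw0 hw j) β)
    (fun j hj _ hB => setIntegral_reward_succ_sub_eq_lookaheadGain hsm hsi hw0 hw hφ β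
      (hXindep.indep_natFiltration_comap_succ hXmeas hsX'
        ((Finset.mem_Ico.mp hj).2.trans_le (hJmax ▸ min_le_left _ _))) hB)
    (measurableSet_lt_of_measurableSet_eq natFiltration_mono hτ_stopping)
    (hτ_range.mono fun ω h => Finset.mem_Icc.mpr h) (fun j hj => Set.ext (hJstar_lt · j hj))
    (ae_of_all _ fun ω => hJstar' ω ▸ firstEntry_mem_Icc hJ1)

/-- The one-stage look-ahead rule is an optimal stopping rule: for every stopping time `τ`
with respect to the natural filtration `σ(s_1,…,s_j)` satisfying `1 ≤ τ ≤ J_max`, the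
one-stage look-ahead stopping step `J*` satisfies
`E[(1 − J*β)·w_{J*}] ≥ E[(1 − τβ)·w_τ]`. -/
theorem one_stage_lookahead_optimal
    {Ω : Type*} [MeasurableSpace Ω] (P : Measure Ω) [IsProbabilityMeasure P]
    (K : ℕ) (hK : 1 ≤ K)
    (X : ℕ → Ω → ℝ)
    (hXmeas : ∀ k, Measurable (X k))
    (hXnonneg : ∀ k ω, 0 ≤ X k ω)
    (hXint : ∀ k, Integrable (X k) P)
    (hXmean : ∀ k, ∫ ω, X k ω ∂P = 1)
    (hXindep : iIndepFun (fun k : Fin K => X (k + 1)) P)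
    (hXident : ∀ k l, IdentDistrib (X k) (X l) P P)
    (c : ℕ → ℝ) (hc_nonneg : ∀ k, 0 ≤ c k)
    (hc_mono : ∀ k l : ℕ, k ≤ l → c l ≤ c k)
    (β : ℝ) (hβ0 : 0 < β) (hβ1 : β < 1)
    (Jmax : ℕ) (hJmax : Jmax = min K ⌊1 / β⌋₊)
    (s : ℕ → Ω → ℝ) (hs : ∀ k ω, s k ω = c k * X k ω)
    (w : ℕ → Ω → ℝ)
    (hw0 : ∀ ω, w 0 ω = 0)
    (hw : ∀ j ω, w (j + 1) ω = max (w j ω) (s (j + 1) ω))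
    (φ : ℕ → ℝ → ℝ)
    (hφ : ∀ k x, φ k x = ∫ ω, max x (s k ω) ∂P)
    (F : ℕ → MeasurableSpace Ω)
    (hF : ∀ j, F j = ⨆ k ∈ Finset.Icc 1 j, MeasurableSpace.comap (s k) inferInstance)
    (Jstar : Ω → ℕ)
    (hJstar : ∀ ω, Jstar ω =
      sInf ({j : ℕ | 1 ≤ j ∧ j ≤ Jmax - 1 ∧
        (1 - (j : ℝ) * β) * w j ω ≥ (1 - ((j : ℝ) + 1) * β) * φ (j + 1) (w j ω)}
        ∪ {Jmax}))
    (τ : Ω → ℕ)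
    (hτ_stopping : ∀ j : ℕ, MeasurableSet[F j] {ω | τ ω = j})
    (hτ_range : ∀ᵐ ω ∂P, 1 ≤ τ ω ∧ τ ω ≤ Jmax) :
    ∫ ω, (1 - (τ ω : ℝ) * β) * w (τ ω) ω ∂P ≤
      ∫ ω, (1 - (Jstar ω : ℝ) * β) * w (Jstar ω) ω ∂P :=
  one_stage_lookahead_optimal_general P K X hXmeas hXnonneg hXint hXindep hXident c hc_mono β hβ0
    Jmax hJmax s hs w hw0 hw φ hφ F hF Jstar hJstar τ hτ_stopping hτ_range
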